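/- arXiv:1304.6280 — 6 statements merged into one kernel-verified Lean document; each statement's English description precedes it below -/
import Mathlib

section
/- Any morphism that is strongly quasiperiodic on finite words is strongly quasiperiodic on infinite words. -/
/-!
Apply the hypothesis to the finite words `x[0,n) x(0)^k` with `k` large. A quasiperiod `q` of
`W = f(x[0,n)) f(x(0))^k` is a border of `W`, so `W` has period `|W| - |q|`; shifting by multiples
of it moves positions of `f(x[0,n))` into the power `f(x(0))^k`, so the prefix of `f(x)` of length
`min |q| |f(x[0,n))|` has period `|f(x(0))|`. If one length `|q|` recurs for infinitely many `n`,
the prefix of `f(x)` of that length covers arbitrarily long prefixes of `f(x)`, hence all of it.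
Otherwise `|q| → ∞`, so `f(x)` is periodic with period `|f(x(0))|`.
-/

namespace QPm

variable {A : Type*}

/-- Image of a finite word under a morphism given by images of letters. -/
def applyF (f : A → List A) (w : List A) : List A := (w.map f).flatten

/-- A morphism is non-erasing if images of letters are nonempty. -/
def NonErasing (f : A → List A) : Prop := ∀ a, f a ≠ []

/-- `wpow u k` is the `k`-fold concatenation `u^k`. -/
def wpow (u : List A) (k : ℕ) : List A := (List.replicate k u).flatten

/-- Every position of `w` is covered by an occurrence of `q` in `w`. -/
def Covers (q w : List A) : Prop :=
  ∀ i < w.length, ∃ j, j ≤ i ∧ i < j + q.length ∧ j + q.length ≤ w.length ∧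
    (w.drop j).take q.length = q

/-- `w` is `q`-quasiperiodic. -/
def QP (q w : List A) : Prop := q ≠ [] ∧ w ≠ q ∧ Covers q w

def Quasiperiodic (w : List A) : Prop := ∃ q, QP q w

def Superprimitive (w : List A) : Prop := ¬ Quasiperiodic w

/-- `q` is THE quasiperiod (shortest quasiperiod) of `w`. -/
def IsQuasiperiod (q w : List A) : Prop :=
  QP q w ∧ ∀ q', QP q' w → q.length ≤ q'.length

/-- Every position of the infinite word `x` is covered by an occurrence of `q`. -/
def InfCovers (q : List A) (x : ℕ → A) : Prop :=
  ∀ i : ℕ, ∃ j, j ≤ i ∧ i < j + q.length ∧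
    ∀ t (ht : t < q.length), x (j + t) = q.get ⟨t, ht⟩

/-- The infinite word `x` is `q`-quasiperiodic. -/
def InfQP (q : List A) (x : ℕ → A) : Prop := q ≠ [] ∧ InfCovers q x

def InfQuasiperiodic (x : ℕ → A) : Prop := ∃ q, InfQP q x

/-- `q` is THE quasiperiod (shortest quasiperiod) of the infinite word `x`. -/
def IsInfQuasiperiod (q : List A) (x : ℕ → A) : Prop :=
  InfQP q x ∧ ∀ q', InfQP q' x → q.length ≤ q'.length

/-- Image of an infinite word under a (non-erasing) morphism: the `n`-th letter
of `f(x)` is the `n`-th letter of the image of a sufficiently long prefix. -/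
def mapInf (f : A → List A) (x : ℕ → A) (n : ℕ) : A :=
  (applyF f (List.ofFn (fun i : Fin (n + 1) => x i))).getD n (x 0)

/-- `f` maps every (nonempty) finite word to a quasiperiodic word. -/
def StronglyQPFin (f : A → List A) : Prop :=
  ∀ w : List A, w ≠ [] → Quasiperiodic (applyF f w)

/-- `f` maps every infinite word to a quasiperiodic infinite word. -/
def StronglyQPInf (f : A → List A) : Prop :=
  ∀ x : ℕ → A, InfQuasiperiodic (mapInf f x)

/-- `f` maps some non-quasiperiodic finite word to a quasiperiodic word. -/
def WeaklyQPFin (f : A → List A) : Prop :=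
  ∃ w : List A, ¬ Quasiperiodic w ∧ Quasiperiodic (applyF f w)

/-- `f` maps some non-quasiperiodic infinite word to a quasiperiodic word. -/
def WeaklyQPInf (f : A → List A) : Prop :=
  ∃ x : ℕ → A, ¬ InfQuasiperiodic x ∧ InfQuasiperiodic (mapInf f x)

/-- The ultimately periodic infinite word `u v^ω` (with default letter `d`
used only when `v` is empty). -/
def ultPer (u v : List A) (d : A) : ℕ → A :=
  fun n => if h : n < u.length then u.get ⟨n, h⟩
           else v.getD ((n - u.length) % v.length) d

/-- A finite word is primitive if it is not a power `u^k` with `k ≥ 2`. -/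
def Primitive (w : List A) : Prop :=
  ¬ ∃ (u : List A) (k : ℕ), 2 ≤ k ∧ w = wpow u k

/-- `k`-fold composition of the morphism `f`. -/
def iterF (f : A → List A) : ℕ → A → List A
  | 0, a => [a]
  | (k + 1), a => applyF f (iterF f k a)


theorem applyF_append (f : A → List A) (u v : List A) :
    applyF f (u ++ v) = applyF f u ++ applyF f v := by
  simp [applyF]

theorem applyF_replicate (f : A → List A) (k : ℕ) (a : A) :
    applyF f (List.replicate k a) = wpow (f a) k := by
  simp [applyF, wpow, List.map_replicate]

theorem length_le_length_applyF {f : A → List A} (hf : NonErasing f) (u : List A) :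
    u.length ≤ (applyF f u).length := by
  induction u with
  | nil => simp
  | cons a u ih =>
    have := List.length_pos_iff.mpr (hf a)
    simp only [applyF, List.map_cons, List.flatten_cons, List.length_append,
      List.length_cons] at ih ⊢
    omega

theorem _root_.List.IsPrefix.applyF (f : A → List A) {u v : List A} (h : u <+: v) :
    applyF f u <+: applyF f v := by
  obtain ⟨w, rfl⟩ := h
  rw [applyF_append]
  exact List.prefix_append _ _

theorem length_wpow (u : List A) (k : ℕ) : (wpow u k).length = k * u.length := by
  simp [wpow]

theorem hasPeriod_wpow (u : List A) (k : ℕ) : (wpow u k).HasPeriod u.length := by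
  rw [List.hasPeriod_iff_getElem?]
  intro s hs
  cases k with
  | zero => simp [length_wpow] at hs
  | succ k =>
    have hsk : s < (wpow u k).length := by
      simp only [length_wpow, Nat.succ_mul] at hs ⊢
      omega
    calc (wpow u (k + 1))[s]?
        = (wpow u k ++ u)[s]? := by simp [wpow, List.replicate_succ']
      _ = (wpow u k)[s]? := List.getElem?_append_left hsk
      _ = (u ++ wpow u k)[s + u.length]? := by
          rw [List.getElem?_append_right (by omega), Nat.add_sub_cancel]
      _ = (wpow u (k + 1))[s + u.length]? := by simp [wpow, List.replicate_succ]

theorem _root_.List.HasPeriod.getElem?_add_mul {w : List A} {p : ℕ} (h : w.HasPeriod p)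
    {s m : ℕ} (hs : s + m * p < w.length) : w[s + m * p]? = w[s]? := by
  induction m with
  | zero => simp
  | succ m ih =>
    rw [List.hasPeriod_iff_getElem?] at h
    rw [Nat.succ_mul] at hs ⊢
    rw [← Nat.add_assoc, ← h _ (by omega), ih (by omega)]

theorem getElem?_add_eq_of_hasPeriod_append {u v : List A} {d p m t : ℕ}
    (hd : (u ++ v).HasPeriod d) (hp : v.HasPeriod p) (hu : u.length ≤ t + m * d)
    (hlt : t + p + m * d < (u ++ v).length) : (u ++ v)[t + p]? = (u ++ v)[t]? := by
  rw [List.length_append] at hlt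
  rw [List.hasPeriod_iff_getElem?] at hp
  calc (u ++ v)[t + p]?
      = (u ++ v)[t + p + m * d]? := (hd.getElem?_add_mul (by simpa using hlt)).symm
    _ = v[t + m * d - u.length + p]? := by
        rw [List.getElem?_append_right (by omega)]
        congr 1
        omega
    _ = v[t + m * d - u.length]? := (hp _ (by omega)).symm
    _ = (u ++ v)[t + m * d]? := by rw [List.getElem?_append_right hu]
    _ = (u ++ v)[t]? := hd.getElem?_add_mul (by simp; omega)

section Covers

variable {q w : List A}

theorem Covers.take_eq (h : Covers q w) (hw : w ≠ []) : w.take q.length = q := by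
  obtain ⟨j, hj, -, -, hocc⟩ := h 0 (List.length_pos_iff.mpr hw)
  obtain rfl : j = 0 := Nat.le_zero.mp hj
  simpa using hocc

theorem Covers.drop_eq (h : Covers q w) (hw : w ≠ []) : w.drop (w.length - q.length) = q := by
  have hpos := List.length_pos_iff.mpr hw
  obtain ⟨j, hj, hjq, hjw, hocc⟩ := h (w.length - 1) (by omega)
  obtain rfl : j = w.length - q.length := by omega
  rwa [List.take_of_length_le (by simp; omega)] at hocc

theorem Covers.exists_occurrence (h : Covers q w) (hw : w ≠ []) {i : ℕ} (hi : i < w.length) :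
    ∃ j ≤ i, i < j + q.length ∧ j + q.length ≤ w.length ∧
      ∀ t < q.length, w[j + t]? = w[t]? := by
  obtain ⟨j, hji, hij, hjw, hocc⟩ := h i hi
  refine ⟨j, hji, hij, hjw, fun t ht => ?_⟩
  rw [← List.getElem?_take_of_lt ht, h.take_eq hw, ← hocc, List.getElem?_take_of_lt ht,
    List.getElem?_drop]

theorem Covers.hasPeriod (h : Covers q w) (hw : w ≠ []) :
    w.HasPeriod (w.length - q.length) := by
  rw [List.hasPeriod_iff_getElem?]
  intro s hs
  rw [Nat.add_comm, ← List.getElem?_drop, h.drop_eq hw, ← h.take_eq hw,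
    List.getElem?_take_of_lt (by omega)]

theorem QP.length_lt (h : QP q w) (hw : w ≠ []) : q.length < w.length := by
  by_contra hle
  exact h.2.1 (by rw [← h.2.2.take_eq hw, List.take_of_length_le (by omega)])

end Covers

/-- The border `q` gives `u a^k` the period `|u a^k| - |q|`; if it is below `|u|`, then `|u|`
steps of it (at most `|u|²`, still inside `a^k`) carry every position of `u` into `a^k`. -/
theorem QP.getElem?_add_length_of_append_wpow {u a q : List A} {k t : ℕ}
    (hk : u.length * u.length < k) (hq : QP q (u ++ wpow a k))
    (ht : t + a.length < min q.length u.length) :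
    u[t + a.length]? = u[t]? := by
  rw [lt_min_iff] at ht
  obtain ha | ha := Nat.eq_zero_or_pos a.length
  · simp [ha]
  have hN : (u ++ wpow a k).length = u.length + k * a.length := by simp [length_wpow]
  have hne : u ++ wpow a k ≠ [] := List.ne_nil_of_length_pos (by omega)
  have hd := hq.2.2.hasPeriod hne
  have hℓ := hq.length_lt hne
  have hka : k ≤ k * a.length := Nat.le_mul_of_pos_right k (by omega)
  rw [← List.getElem?_append_left (l₂ := wpow a k) (i := t + a.length) (by omega),
    ← List.getElem?_append_left (l₂ := wpow a k) (i := t) (by omega)]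
  rcases le_or_gt u.length ((u ++ wpow a k).length - q.length) with hud | hdu
  · exact getElem?_add_eq_of_hasPeriod_append (m := 1) hd (hasPeriod_wpow a k) (by omega)
      (by omega)
  · have hLd := Nat.mul_le_mul_left u.length hdu.le
    have hL := Nat.le_mul_of_pos_right u.length
      (show 0 < (u ++ wpow a k).length - q.length by omega)
    exact getElem?_add_eq_of_hasPeriod_append (m := u.length) hd (hasPeriod_wpow a k)
      (by omega) (by omega)

def pref (x : ℕ → A) (n : ℕ) : List A := List.ofFn fun i : Fin n => x i

theorem pref_prefix_pref (x : ℕ → A) {m n : ℕ} (h : m ≤ n) : pref x m <+: pref x n := by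
  rw [List.prefix_iff_getElem?]
  intro i hi
  simp only [pref, List.length_ofFn] at hi
  simp [pref, show i < n by omega]

theorem getElem?_applyF_pref {f : A → List A} (hf : NonErasing f) (x : ℕ → A) {n t : ℕ}
    (ht : t < (applyF f (pref x n)).length) :
    (applyF f (pref x n))[t]? = some (mapInf f x t) := by
  set N := max n (t + 1)
  have hpre : ∀ m ≤ N, applyF f (pref x m) <+: applyF f (pref x N) :=
    fun m hm => (pref_prefix_pref x hm).applyF f
  have hlong : t < (applyF f (pref x (t + 1))).length := by
    simpa [pref] using length_le_length_applyF hf (pref x (t + 1))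
  change _ = some ((applyF f (pref x (t + 1))).getD t (x 0))
  rw [List.getD_eq_getElem _ _ hlong, List.getElem?_eq_getElem ht,
    (hpre n (le_max_left _ _)).getElem ht, (hpre (t + 1) (le_max_right _ _)).getElem hlong]

theorem exists_prefix_occurrences_and_period {f : A → List A} (hf : NonErasing f)
    (h : StronglyQPFin f) (x : ℕ → A) (n : ℕ) :
    ∃ ℓ, 0 < ℓ ∧
      (∀ i, i + ℓ ≤ (applyF f (pref x n)).length →
        ∃ j ≤ i, i < j + ℓ ∧ ∀ t < ℓ, mapInf f x (j + t) = mapInf f x t) ∧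
      ∀ t, t + (f (x 0)).length < min ℓ (applyF f (pref x n)).length →
        mapInf f x (t + (f (x 0)).length) = mapInf f x t := by
  set P := applyF f (pref x n)
  set k := P.length * P.length + 1
  obtain ⟨q, hq⟩ := h (pref x n ++ List.replicate k (x 0)) (by simp [k])
  rw [applyF_append, applyF_replicate] at hq
  change QP q (P ++ wpow (f (x 0)) k) at hq
  have hℓ := List.length_pos_of_ne_nil hq.1
  have hF : ∀ t < P.length, P[t]? = some (mapInf f x t) := fun t => getElem?_applyF_pref hf x
  refine ⟨q.length, hℓ, fun i hi => ?_, fun t ht => ?_⟩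
  · have hiW : i < (P ++ wpow (f (x 0)) k).length := by
      simp only [List.length_append]
      omega
    obtain ⟨j, hji, hij, -, hocc⟩ :=
      hq.2.2.exists_occurrence (List.ne_nil_of_length_pos (by omega)) hiW
    refine ⟨j, hji, hij, fun t ht' => Option.some_injective _ ?_⟩
    rw [← hF _ (by omega), ← hF _ (by omega),
      ← List.getElem?_append_left (l₂ := wpow (f (x 0)) k) (i := j + t) (by omega),
      ← List.getElem?_append_left (l₂ := wpow (f (x 0)) k) (i := t) (by omega), hocc t ht']
  · rw [lt_min_iff] at ht
    apply Option.some_injective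
    rw [← hF _ ht.2, ← hF _ (by omega),
      hq.getElem?_add_length_of_append_wpow (Nat.lt_succ_self _) (lt_min ht.1 ht.2)]

theorem infQuasiperiodic_of_prefix_occurrences {F : ℕ → A} {ℓ : ℕ} (hℓ : 0 < ℓ)
    (h : ∀ i, ∃ j ≤ i, i < j + ℓ ∧ ∀ t < ℓ, F (j + t) = F t) : InfQuasiperiodic F := by
  refine ⟨List.ofFn fun t : Fin ℓ => F t, by simpa using hℓ.ne', fun i => ?_⟩
  obtain ⟨j, hji, hij, hocc⟩ := h i
  exact ⟨j, hji, by simpa using hij, fun t ht => by simpa using hocc t (by simpa using ht)⟩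

theorem _root_.Function.Periodic.infQuasiperiodic {F : ℕ → A} {p : ℕ}
    (h : Function.Periodic F p) (hp : 0 < p) : InfQuasiperiodic F :=
  infQuasiperiodic_of_prefix_occurrences hp fun i =>
    ⟨i / p * p, Nat.div_mul_le_self i p, Nat.lt_div_mul_add hp, fun t _ => by
      simpa [add_comm] using h.nat_mul (i / p) t⟩

theorem stmt2 {A : Type*} (f : A → List A) (hf : NonErasing f)
    (h : StronglyQPFin f) : StronglyQPInf f := by
  intro x
  choose ℓ hℓ hocc hper using exists_prefix_occurrences_and_period hf h x
  have hlen (n : ℕ) : n ≤ (applyF f (pref x n)).length := by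
    simpa [pref] using length_le_length_applyF hf (pref x n)
  by_cases hfreq : ∃ m, ∃ᶠ n in Filter.atTop, ℓ n = m
  · obtain ⟨m, hm⟩ := hfreq
    obtain ⟨n₀, rfl⟩ := hm.exists
    refine infQuasiperiodic_of_prefix_occurrences (hℓ n₀) fun i => ?_
    obtain ⟨n, hn, hin⟩ := (hm.and_eventually (Filter.eventually_ge_atTop (i + ℓ n₀))).exists
    rw [← hn]
    exact hocc n i (hn ▸ hin.trans (hlen n))
  · simp only [not_exists, Filter.not_frequently] at hfreq
    refine Function.Periodic.infQuasiperiodic (fun t => ?_)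
      (List.length_pos_of_ne_nil (hf (x 0)))
    set B := t + (f (x 0)).length
    have hlarge : ∀ᶠ n in Filter.atTop, ∀ m ∈ Set.Iic B, ℓ n ≠ m :=
      (Filter.eventually_all_finite (Set.finite_Iic B)).2 fun m _ => hfreq m
    obtain ⟨n, hn, hBn⟩ := (hlarge.and (Filter.eventually_gt_atTop B)).exists
    exact hper n t (lt_min (not_le.1 fun hle => hn _ hle rfl) (hBn.trans_le (hlen n)))

end QPm
end

section
/- The morphism f on {a,b} defined by f(a) = abaababaababababaab and f(b) = abaabaabababababaab maps every right-infinite word over {a,b} to an aba-quasiperiodic infinite word; hence f is strongly quasiperiodic on infinite words. -/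
namespace QPm

variable {A : Type*}

/-- `f(a) = abaababaababababaab`, `f(b) = abaabaabababababaab`, with `a := true`, `b := false`. -/
def f4 : Bool → List Bool
  | true => [true, false, true, true, false, true, false, true, true, false, true, false, true, false, true, false, true, true, false]
  | false => [true, false, true, true, false, true, true, false, true, false, true, false, true, false, true, false, true, true, false]

/-
Both images `f(a)` and `f(b)` have length 19 and begin with `aba`. Every position of
`f(c) · aba` is covered by an occurrence of `aba`, for either letter `c`. In `f(x)` each block
`f(x k)` is followed by `f(x (k+1))`, which begins with `aba`, so these occurrences are also
occurrences in `f(x)`, and together they cover every position.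
-/

variable {f : A → List A} {L : ℕ}

lemma length_applyF_of_uniform (hf : ∀ a, (f a).length = L) (w : List A) :
    (applyF f w).length = L * w.length := by
  induction w with
  | nil => rfl
  | cons a w ih =>
    simp only [applyF, List.map_cons, List.flatten_cons, List.length_append, List.length_cons] at ih ⊢
    rw [ih, hf]; ring

lemma getElem_applyF_of_uniform (hf : ∀ a, (f a).length = L) (w : List A) {k r : ℕ}
    (hk : k < w.length) (hr : r < L) :
    (applyF f w)[L * k + r]'(by rw [length_applyF_of_uniform hf]; nlinarith) =
      (f w[k])[r]'(by rw [hf]; exact hr) := by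
  induction w generalizing k with
  | nil => simp at hk
  | cons a w ih =>
    simp only [applyF, List.map_cons, List.flatten_cons] at ih ⊢
    rcases k with _ | k
    · simp [List.getElem_append_left, hf, hr]
    · rw [List.getElem_append_right (by rw [hf]; nlinarith)]
      simp only [hf, List.getElem_cons_succ]
      convert ih (by simpa using hk) using 2
      rw [Nat.mul_succ]; omega

lemma mapInf_of_uniform (hf : ∀ a, (f a).length = L) (x : ℕ → A) {k r : ℕ} (hr : r < L) :
    mapInf f x (L * k + r) = (f (x k))[r]'(by rw [hf]; exact hr) := by
  have hk : k < L * k + r + 1 := by nlinarith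
  rw [mapInf, List.getD_eq_getElem _ _ (by rw [length_applyF_of_uniform hf, List.length_ofFn]; nlinarith),
    getElem_applyF_of_uniform hf _ (by simpa using hk) hr]
  simp only [List.getElem_ofFn]

variable {q : List A}

lemma mapInf_of_uniform_of_prefix (hf : ∀ a, (f a).length = L) (hpre : ∀ a, q <+: f a)
    (x : ℕ → A) {k m : ℕ} (hm : m < (f (x k) ++ q).length) :
    mapInf f x (L * k + m) = (f (x k) ++ q)[m] := by
  by_cases hmL : m < L
  · rw [mapInf_of_uniform hf x hmL, List.getElem_append_left]
  · obtain ⟨u, hu⟩ := hpre (x (k + 1))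
    have hqL : q.length ≤ L := hf (x 0) ▸ (hpre (x 0)).length_le
    have hq : m - L < q.length := by rw [List.length_append, hf] at hm; omega
    have hshift : L * k + m = L * (k + 1) + (m - L) := by rw [Nat.mul_succ]; omega
    rw [hshift, mapInf_of_uniform hf x (by omega),
      List.getElem_append_right (by rw [hf]; omega)]
    simp only [← hu, hf, List.getElem_append_left hq]

theorem infQP_mapInf_of_uniform (hq : q ≠ []) (hf : ∀ a, (f a).length = L)
    (hpre : ∀ a, q <+: f a) (hcov : ∀ a, Covers q (f a ++ q)) (x : ℕ → A) :
    InfQP q (mapInf f x) := by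
  refine ⟨hq, fun i => ?_⟩
  have hL : 0 < L := hf (x 0) ▸ (List.length_pos_iff.2 hq).trans_le (hpre (x 0)).length_le
  obtain ⟨j, hji, hij, hjq, hocc⟩ := hcov (x (i / L)) (i % L)
    (by simp only [List.length_append, hf]; have := Nat.mod_lt i hL; omega)
  refine ⟨L * (i / L) + j, by have := Nat.div_add_mod i L; omega,
    by have := Nat.div_add_mod i L; omega, fun t ht => ?_⟩
  rw [add_assoc, mapInf_of_uniform_of_prefix hf hpre x (by omega), List.get_eq_getElem, ← List.getElem_of_eq hocc (by rw [hocc]; exact ht)]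
  simp only [List.getElem_take, List.getElem_drop]

lemma length_f4 (c : Bool) : (f4 c).length = 19 := by cases c <;> rfl

lemma aba_prefix_f4 (c : Bool) : [true, false, true] <+: f4 c := by cases c <;> decide

lemma covers_aba_f4_append (c : Bool) :
    Covers [true, false, true] (f4 c ++ [true, false, true]) := by
  cases c <;> unfold Covers <;> decide

theorem stmt4 :
    (∀ x : ℕ → Bool, InfQP [true, false, true] (mapInf f4 x)) ∧
    StronglyQPInf f4 := by
  have hQP (x : ℕ → Bool) : InfQP [true, false, true] (mapInf f4 x) :=
    infQP_mapInf_of_uniform (by simp) length_f4 aba_prefix_f4 covers_aba_f4_append x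
  exact ⟨hQP, fun x => ⟨_, hQP x⟩⟩

end QPm
end

section
/- The morphism f on {a,b} defined by f(a) = aa, f(b) = bb is weakly quasiperiodic on finite words but not weakly quasiperiodic on infinite words. -/
/-!
Since `f5` doubles every letter, `f5(x)` is `n ↦ x (n / 2)`. The superprimitive word `a` is sent
to the `a`-quasiperiodic word `aa`. For infinite words, let `q` be a quasiperiod of `f5(x)`; it
occurs at `0`. If it also occurs at an odd position, comparing the two occurrences shows that `q`
is a power of one letter, hence so are `f5(x)` and `x`. Otherwise every occurrence starts at an
even position `2 j`, and halving these occurrences covers `x` by its prefix of length `⌈|q| / 2⌉`.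
-/

namespace QPm

variable {A : Type*}

/-- The morphism `a ↦ aa`, `b ↦ bb`. -/
def f5 : Bool → List Bool := fun x => [x, x]

lemma getD_applyF_replicate (k : ℕ) (w : List A) (d : A) {n : ℕ} (hn : n < k * w.length) :
    (applyF (List.replicate k) w).getD n d = w.getD (n / k) d := by
  induction w generalizing n with
  | nil => simp at hn
  | cons a w ih =>
    have hk : 0 < k := Nat.pos_of_mul_pos_right (b := (a :: w).length) (by omega)
    simp only [applyF, List.map_cons, List.flatten_cons] at ih ⊢
    by_cases hnk : n < k
    · rw [List.getD_append _ _ _ _ (by simpa using hnk), Nat.div_eq_of_lt hnk]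
      simp [hnk]
    · push Not at hnk
      have hdiv : n / k = (n - k) / k + 1 := by
        rw [← Nat.sub_add_cancel hnk, Nat.add_div_right _ hk, Nat.add_sub_cancel]
      rw [List.getD_append_right _ _ _ _ (by simpa using hnk), List.length_replicate, hdiv,
        List.getD_cons_succ, ih]
      simp only [List.length_cons, Nat.mul_succ] at hn
      omega

lemma mapInf_replicate (k : ℕ) (hk : 0 < k) (x : ℕ → A) (n : ℕ) :
    mapInf (List.replicate k) x n = x (n / k) := by
  have hlt : n / k < n + 1 := Nat.lt_succ_of_le (Nat.div_le_self n k)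
  rw [mapInf, getD_applyF_replicate k _ _ (by rw [List.length_ofFn]; nlinarith),
    List.getD_eq_getElem _ _ (by simpa using hlt), List.getElem_ofFn]

lemma not_quasiperiodic_singleton (a : A) : ¬ Quasiperiodic [a] := by
  rintro ⟨q, hq, hne, hcov⟩
  obtain ⟨j, hj, -, hlen, hocc⟩ := hcov 0 (by simp)
  obtain rfl : j = 0 := Nat.le_zero.mp hj
  have hq1 : q.length = 1 := by
    have := List.length_pos_iff.mpr hq
    simp only [zero_add, List.length_singleton] at hlen
    omega
  exact hne (by simpa [hq1] using hocc)

lemma qp_singleton_replicate (a : A) {n : ℕ} (hn : 2 ≤ n) : QP [a] (List.replicate n a) := by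
  have hne : List.replicate n a ≠ [a] := fun h => by
    have := congrArg List.length h
    simp only [List.length_replicate, List.length_singleton] at this
    omega
  refine ⟨List.cons_ne_nil _ _, hne, ?_⟩
  intro i hi
  refine ⟨i, le_rfl, by simp, by simpa using hi, ?_⟩
  rw [List.drop_replicate, List.length_singleton, List.take_replicate,
    min_eq_left (by rw [List.length_replicate] at hi; omega), List.replicate_one]

def OccursAt (q : List A) (x : ℕ → A) (j : ℕ) : Prop :=
  ∀ t (ht : t < q.length), x (j + t) = q.get ⟨t, ht⟩

section InfCovers

variable {q : List A} {x : ℕ → A}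

lemma InfCovers.exists_occursAt (h : InfCovers q x) (i : ℕ) :
    ∃ j, j ≤ i ∧ i < j + q.length ∧ OccursAt q x j :=
  h i

lemma InfCovers.occursAt_zero (h : InfCovers q x) : OccursAt q x 0 := by
  obtain ⟨j, hj, -, hocc⟩ := h.exists_occursAt 0
  rwa [Nat.le_zero.mp hj] at hocc

lemma InfCovers.eq_of_forall_get_eq {c : A} (h : InfCovers q x)
    (hq : ∀ t (ht : t < q.length), q.get ⟨t, ht⟩ = c) (n : ℕ) : x n = c := by
  obtain ⟨j, hj, hn, hocc⟩ := h.exists_occursAt n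
  rw [← hq (n - j) (by omega), ← hocc, Nat.add_sub_cancel' hj]

lemma infQP_singleton_of_forall_eq {c : A} (h : ∀ n, x n = c) : InfQP [c] x :=
  ⟨List.cons_ne_nil _ _, fun i => ⟨i, le_rfl, by simp, fun t ht => by
    obtain rfl : t = 0 := by simpa using ht
    simpa using h i⟩⟩

end InfCovers

section Doubled

variable {q : List A} {x : ℕ → A}

/- Two occurrences of `q` in `fun n => x (n / 2)`, at `0` and at an odd position, force equal
neighbours `q[t] = q[t+1]`: for even `t` from the first, for odd `t` from the second. -/
lemma exists_forall_eq_of_occursAt_odd (hcov : InfCovers q (fun n => x (n / 2)))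
    (hq : q ≠ []) {j : ℕ} (hj : Odd j) (hocc : OccursAt q (fun n => x (n / 2)) j) :
    ∃ c, ∀ n, x n = c := by
  have hocc₀ := hcov.occursAt_zero
  have hsucc : ∀ t (ht : t + 1 < q.length), q.get ⟨t, by omega⟩ = q.get ⟨t + 1, ht⟩ := by
    intro t ht
    rcases Nat.even_or_odd t with ⟨s, rfl⟩ | ⟨s, rfl⟩
    · rw [← hocc₀, ← hocc₀]
      dsimp only
      congr 1
      omega
    · obtain ⟨r, rfl⟩ := hj
      rw [← hocc, ← hocc]
      dsimp only
      congr 1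
      omega
  have hpos := List.length_pos_iff.mpr hq
  have hconst : ∀ t (ht : t < q.length), q.get ⟨t, ht⟩ = q.get ⟨0, hpos⟩ := by
    intro t
    induction t with
    | zero => intro _; rfl
    | succ t ih => intro ht; rw [← hsucc t ht, ih]
  refine ⟨q.get ⟨0, hpos⟩, fun n => ?_⟩
  simpa using hcov.eq_of_forall_get_eq hconst (2 * n)

/- An occurrence of `q` at `2 j` yields an occurrence at `j` of its even-indexed letters, and
these form a prefix of `x` because `q` also occurs at `0`. -/
lemma infCovers_prefix_of_occursAt_even (hcov : InfCovers q (fun n => x (n / 2)))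
    (heven : ∀ j, OccursAt q (fun n => x (n / 2)) j → Even j) :
    InfCovers (List.ofFn fun s : Fin ((q.length + 1) / 2) => x s) x := by
  have hocc₀ := hcov.occursAt_zero
  intro i
  obtain ⟨j, hj, hij, hocc⟩ := hcov.exists_occursAt (2 * i)
  obtain ⟨r, rfl⟩ := heven j hocc
  refine ⟨r, by omega, by rw [List.length_ofFn]; omega, fun t ht => ?_⟩
  simp only [List.length_ofFn] at ht
  have h : x ((r + r + 2 * t) / 2) = x ((0 + 2 * t) / 2) :=
    (hocc (2 * t) (by omega)).trans (hocc₀ (2 * t) (by omega)).symm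
  rw [show (r + r + 2 * t) / 2 = r + t by omega, show (0 + 2 * t) / 2 = t by omega] at h
  simpa using h

theorem infQuasiperiodic_of_doubled (h : InfQuasiperiodic (fun n => x (n / 2))) :
    InfQuasiperiodic x := by
  obtain ⟨q, hq, hcov⟩ := h
  by_cases hodd : ∃ j, Odd j ∧ OccursAt q (fun n => x (n / 2)) j
  · obtain ⟨j, hj, hocc⟩ := hodd
    obtain ⟨c, hc⟩ := exists_forall_eq_of_occursAt_odd hcov hq hj hocc
    exact ⟨[c], infQP_singleton_of_forall_eq hc⟩
  · push Not at hodd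
    have hpos := List.length_pos_iff.mpr hq
    refine ⟨_, ?_, infCovers_prefix_of_occursAt_even hcov
      fun j hocc => Nat.not_odd_iff_even.mp fun hj => hodd j hj hocc⟩
    rw [← List.length_pos_iff, List.length_ofFn]
    omega

end Doubled

theorem stmt5 : WeaklyQPFin f5 ∧ ¬ WeaklyQPInf f5 := by
  have hf5 : f5 = List.replicate 2 := rfl
  constructor
  · exact ⟨[true], not_quasiperiodic_singleton true, [true], qp_singleton_replicate true le_rfl⟩
  · rintro ⟨x, hx, hfx⟩
    rw [hf5, funext (mapInf_replicate 2 two_pos x)] at hfx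
    exact hx (infQuasiperiodic_of_doubled hfx)

end QPm
end

section
/- If a word q satisfies q = q1 q2 = q2 q3 with |q2| ≥ |q1| = |q3| ≥ 1 (i.e., q has a border of length at least half its length arising from an overlap), then q is quasiperiodic; in particular, a superprimitive word q cannot be written q = q1 q2 = q2 q3 with q1 nonempty and |q2| ≥ |q1|. -/
namespace QPm

variable {A : Type*}

theorem covers_of_isPrefix_of_isSuffix {v w : List A} (hpre : v <+: w) (hsuf : v <:+ w)
    (hlen : w.length ≤ 2 * v.length) : Covers v w := by
  have hvw : v.length ≤ w.length := hpre.length_le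
  intro i hi
  by_cases hi' : i < v.length
  · refine ⟨0, i.zero_le, by omega, by omega, ?_⟩
    rw [List.drop_zero, ← List.prefix_iff_eq_take.mp hpre]
  · refine ⟨w.length - v.length, by omega, by omega, by omega, ?_⟩
    rw [← List.suffix_iff_eq_drop.mp hsuf, List.take_length]

theorem quasiperiodic_of_append_eq_append {w p v s : List A} (hpv : w = p ++ v) (hvs : w = v ++ s)
    (hp : p ≠ []) (hle : p.length ≤ v.length) : Quasiperiodic w := by
  have hpos : 0 < p.length := List.length_pos_iff.mpr hp
  have hw : w.length = p.length + v.length := by rw [hpv, List.length_append]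
  refine ⟨v, ?_, ?_, ?_⟩
  · exact List.ne_nil_of_length_pos (by omega)
  · exact fun h => by rw [h] at hw; omega
  · exact covers_of_isPrefix_of_isSuffix ⟨s, hvs.symm⟩ ⟨p, hpv.symm⟩ (by omega)

theorem stmt8 {A : Type*} :
    (∀ q q1 q2 q3 : List A, q = q1 ++ q2 → q = q2 ++ q3 →
      q1.length ≤ q2.length → q1.length = q3.length → 1 ≤ q1.length →
      Quasiperiodic q) ∧
    (∀ q : List A, Superprimitive q →
      ¬ ∃ q1 q2 q3 : List A,
          q = q1 ++ q2 ∧ q = q2 ++ q3 ∧ q1 ≠ [] ∧ q1.length ≤ q2.length) := by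
  refine ⟨fun q q1 q2 q3 h12 h23 hle _ hpos => ?_, ?_⟩
  · exact quasiperiodic_of_append_eq_append h12 h23 (List.ne_nil_of_length_pos hpos) hle
  · rintro q hsp ⟨q1, q2, q3, h12, h23, hne, hle⟩
    exact hsp (quasiperiodic_of_append_eq_append h12 h23 hne hle)

end QPm
end

section
/- If f is a non-erasing morphism that is strongly quasiperiodic on infinite words, then for every infinite word w and every letter α, the quasiperiod of f(w) is a factor of f(α)^3 of length less than 2|f(α)|. -/
namespace QPm

variable {A : Type*}

/-! The shortest quasiperiod of an ultimately periodic word `v e^ω` occurs inside the periodic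
tail, so it has period `|e|`; if it were as long as `2|e|`, dropping its last `|e|` letters would
leave a shorter quasiperiod. Hence it is a factor of `e^3` of length less than `2|e|`. Applied to
`f(w[0,n) α^ω) = f(w[0,n)) f(α)^ω`, this leaves finitely many candidates, so one of them, `r`,
is a quasiperiod for infinitely many `n`; since these words agree with `f(w)` on ever longer
prefixes, `r` is a quasiperiod of `f(w)`, and the shortest quasiperiod of `f(w)` is a prefix of
`r`. -/

theorem wpow_succ (u : List A) (k : ℕ) : wpow u (k + 1) = u ++ wpow u k := by
  simp [wpow, List.replicate_succ]

theorem wpow_succ' (u : List A) (k : ℕ) : wpow u (k + 1) = wpow u k ++ u := by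
  simp [wpow, List.replicate_succ']

theorem getElem?_wpow {u : List A} {k i : ℕ} (hi : i < k * u.length) :
    (wpow u k)[i]? = u[i % u.length]? := by
  obtain ⟨k, rfl⟩ : ∃ k', k = k' + 1 :=
    Nat.exists_eq_succ_of_ne_zero (by rintro rfl; simp at hi)
  have hu : 0 < u.length := Nat.pos_of_mul_pos_left (Nat.zero_lt_of_lt hi)
  rw [← (hasPeriod_wpow u (k + 1)).getElem?_mod _ i _ (by rwa [length_wpow]), wpow_succ,
    List.getElem?_append_left (Nat.mod_lt _ hu)]

theorem infix_wpow_of_getElem?_eq {r u : List A} {s k : ℕ}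
    (hlen : s % u.length + r.length ≤ k * u.length)
    (hr : ∀ t < r.length, r[t]? = u[(s + t) % u.length]?) : r <:+: wpow u k := by
  refine List.infix_iff_getElem?.2 ⟨s % u.length, by rw [length_wpow]; omega, fun t ht => ?_⟩
  rw [getElem?_wpow (by omega), ← List.getElem?_eq_getElem ht, hr t ht, Nat.add_mod_mod,
    Nat.add_comm]

theorem hasPeriod_of_getElem?_eq {r u : List A} {s : ℕ}
    (hr : ∀ t < r.length, r[t]? = u[(s + t) % u.length]?) : r.HasPeriod u.length := by
  refine List.hasPeriod_iff_getElem?.2 fun t ht => ?_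
  rw [hr t (by omega), hr (t + u.length) (by omega), ← Nat.add_assoc, Nat.add_mod_right]

theorem ultPer_of_length_le {u v : List A} {d : A} {n : ℕ} (h : u.length ≤ n) :
    ultPer u v d n = v.getD ((n - u.length) % v.length) d := by
  simp [ultPer, Nat.not_lt.2 h]

theorem ultPer_of_lt_length {u v : List A} {d : A} {n : ℕ} (h : n < u.length) :
    ultPer u v d n = u[n] := by
  simp [ultPer, h]

theorem InfQuasiperiodic.exists_isInfQuasiperiod {x : ℕ → A} (hx : InfQuasiperiodic x) :
    ∃ q, IsInfQuasiperiod q x := by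
  obtain ⟨q, hq, hmin⟩ := (measure List.length).wf.has_min {q | InfQP q x} hx
  exact ⟨q, hq, fun q' hq' => Nat.not_lt.1 (hmin q' hq')⟩

theorem InfCovers.getElem_eq {q : List A} {x : ℕ → A} (hq : InfCovers q x) (t : ℕ)
    (ht : t < q.length) : q[t] = x t := by
  obtain ⟨j, hj, -, hocc⟩ := hq 0
  obtain rfl : j = 0 := Nat.le_zero.1 hj
  simpa using (hocc t ht).symm

theorem InfCovers.prefix_of_length_le {q r : List A} {x : ℕ → A} (hq : InfCovers q x)
    (hr : InfCovers r x) (hqr : q.length ≤ r.length) : q <+: r :=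
  List.prefix_iff_getElem.2
    ⟨hqr, fun t ht => by rw [hq.getElem_eq t ht, hr.getElem_eq t (by omega)]⟩

theorem InfCovers.take_of_hasPeriod {r : List A} {x : ℕ → A} {p : ℕ} (hr : InfCovers r x)
    (hp : r.HasPeriod p) (h2p : 2 * p ≤ r.length) : InfCovers (r.take (r.length - p)) x := by
  intro i
  obtain ⟨j, hji, hij, hocc⟩ := hr i
  simp only [List.length_take, List.get_eq_getElem, List.getElem_take] at hocc ⊢
  by_cases hi : i < j + (r.length - p)
  · exact ⟨j, hji, by omega, fun t ht => hocc t (by omega)⟩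
  -- otherwise `i` lies in the occurrence of `r.take (r.length - p)` shifted right by the period
  refine ⟨j + p, by omega, by omega, fun t ht => ?_⟩
  have hshift : r[t + p]? = r[t]? := (List.hasPeriod_iff_getElem?.1 hp t (by omega)).symm
  rw [List.getElem?_eq_getElem (by omega), List.getElem?_eq_getElem (by omega),
    Option.some_inj, ← hocc (t + p) (by omega)] at hshift
  rw [← hshift, Nat.add_right_comm, Nat.add_assoc]

theorem InfCovers.of_frequently {q : List A} {x : ℕ → A} {y : ℕ → ℕ → A}
    (hxy : ∀ n, ∀ i < n, y n i = x i) (hy : ∃ᶠ n in Filter.atTop, InfCovers q (y n)) :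
    InfCovers q x := by
  intro i
  obtain ⟨n, hn, hcov⟩ := Filter.frequently_atTop.1 hy (i + q.length)
  obtain ⟨j, hji, hij, hocc⟩ := hcov i
  exact ⟨j, hji, hij, fun t ht => by rw [← hxy n (j + t) (by omega), hocc t ht]⟩

theorem IsInfQuasiperiod.infix_wpow_three_of_ultPer {r v e : List A} {d : A} (he : e ≠ [])
    (hr : IsInfQuasiperiod r (ultPer v e d)) :
    r <:+: wpow e 3 ∧ r.length < 2 * e.length := by
  have he' : 0 < e.length := List.length_pos_iff.2 he
  obtain ⟨⟨-, hcov⟩, hmin⟩ := hr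
  -- the occurrence covering position `|v| + |r|` lies in the periodic tail
  obtain ⟨j, -, hj, hocc⟩ := hcov (v.length + r.length)
  have hr_cyc : ∀ t < r.length, r[t]? = e[(j - v.length + t) % e.length]? := by
    intro t ht
    have hocc_t := hocc t ht
    rw [List.get_eq_getElem] at hocc_t
    rw [List.getElem?_eq_getElem ht, ← hocc_t, ultPer_of_length_le (by omega),
      List.getElem?_eq_getElem (Nat.mod_lt _ he'), List.getD_eq_getElem _ _ (Nat.mod_lt _ he'),
      Nat.sub_add_comm (by omega)]
  have hlen : r.length < 2 * e.length := by
    by_contra! h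
    have hshorter := hmin _ ⟨List.ne_nil_of_length_pos (by rw [List.length_take]; omega),
      hcov.take_of_hasPeriod (hasPeriod_of_getElem?_eq hr_cyc) h⟩
    rw [List.length_take] at hshorter
    omega
  have hoffset := Nat.mod_lt (j - v.length) he'
  exact ⟨infix_wpow_of_getElem?_eq (by omega) hr_cyc, hlen⟩

def infPrefix (x : ℕ → A) (n : ℕ) : List A := List.ofFn fun i : Fin n => x i

theorem infPrefix_prefix (x : ℕ → A) {k k' : ℕ} (h : k ≤ k') :
    infPrefix x k <+: infPrefix x k' :=
  List.prefix_iff_getElem.2 ⟨by simpa [infPrefix] using h, fun t ht => by simp [infPrefix]⟩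

theorem infPrefix_ultPer_singleton (u : List A) (a d : A) {k : ℕ} (h : u.length ≤ k) :
    infPrefix (ultPer u [a] d) k = u ++ List.replicate (k - u.length) a := by
  refine List.ext_getElem (by simp [infPrefix]; omega) fun t h₁ h₂ => ?_
  simp only [infPrefix, List.getElem_ofFn, List.getElem_append, List.getElem_replicate]
  split_ifs with ht
  · exact ultPer_of_lt_length ht
  · simp [ultPer_of_length_le (Nat.not_lt.1 ht), Nat.mod_one]

theorem ultPer_infPrefix_of_lt (x : ℕ → A) (v : List A) (d : A) {n i : ℕ} (h : i < n) :
    ultPer (infPrefix x n) v d i = x i := by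
  rw [ultPer_of_lt_length (by simpa [infPrefix] using h)]
  simp [infPrefix]

theorem mapInf_congr (f : A → List A) {x y : ℕ → A} {m : ℕ} (h : ∀ i ≤ m, x i = y i) :
    mapInf f x m = mapInf f y m := by
  unfold mapInf
  rw [h 0 (Nat.zero_le m),
    congrArg List.ofFn (funext fun i : Fin (m + 1) => h i (Nat.lt_succ_iff.mp i.isLt))]

theorem getElem?_applyF_infPrefix {f : A → List A} (hf : NonErasing f) (x : ℕ → A) {m k : ℕ}
    (hm : m < (applyF f (infPrefix x k)).length) :
    (applyF f (infPrefix x k))[m]? = some (mapInf f x m) := by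
  have hm' : m < (applyF f (infPrefix x (m + 1))).length :=
    (length_le_length_applyF hf _).trans_lt' (by simp [infPrefix])
  have hdef : mapInf f x m = (applyF f (infPrefix x (m + 1))).getD m (x 0) := rfl
  rw [hdef, List.getD_eq_getElem _ _ hm', ← List.getElem?_eq_getElem hm']
  rcases le_total k (m + 1) with hk | hk
  · rw [List.prefix_iff_getElem?.1 ((infPrefix_prefix x hk).applyF f) m hm,
      List.getElem?_eq_getElem hm]
  · rw [List.prefix_iff_getElem?.1 ((infPrefix_prefix x hk).applyF f) m hm',
      List.getElem?_eq_getElem hm']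

theorem mapInf_ultPer_singleton {f : A → List A} (hf : NonErasing f) (u : List A) (a d d' : A) :
    mapInf f (ultPer u [a] d) = ultPer (applyF f u) (f a) d' := by
  funext m
  have hpos : 0 < (f a).length := List.length_pos_iff.2 (hf a)
  have himage : applyF f (infPrefix (ultPer u [a] d) (u.length + (m + 1))) =
      applyF f u ++ wpow (f a) (m + 1) := by
    rw [infPrefix_ultPer_singleton _ _ _ (Nat.le_add_right _ _), applyF_append, applyF_replicate,
      Nat.add_sub_cancel_left]
  have hlen : m < (applyF f u ++ wpow (f a) (m + 1)).length := by
    rw [List.length_append, length_wpow]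
    nlinarith
  rw [← Option.some_inj, ← getElem?_applyF_infPrefix hf _ (himage ▸ hlen), himage]
  by_cases hm : m < (applyF f u).length
  · rw [List.getElem?_append_left hm, ultPer_of_lt_length hm, List.getElem?_eq_getElem hm]
  · rw [Nat.not_lt] at hm
    rw [List.length_append, length_wpow] at hlen
    rw [List.getElem?_append_right hm, getElem?_wpow (by omega), ultPer_of_length_le hm,
      List.getD_eq_getElem _ _ (Nat.mod_lt _ hpos), List.getElem?_eq_getElem (Nat.mod_lt _ hpos)]

theorem stmt10 {A : Type*} (f : A → List A) (hf : NonErasing f)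
    (h : StronglyQPInf f) (w : ℕ → A) (α : A) (q : List A)
    (hq : IsInfQuasiperiod q (mapInf f w)) :
    q <:+: wpow (f α) 3 ∧ q.length < 2 * (f α).length := by
  obtain ⟨⟨-, hq_cov⟩, hq_min⟩ := hq
  let y n := mapInf f (ultPer (infPrefix w n) [α] α)
  let candidates := {r | r ≠ [] ∧ r <:+: wpow (f α) 3 ∧ r.length < 2 * (f α).length}
  have hy : ∀ n, ∃ r ∈ candidates, InfCovers r (y n) := by
    intro n
    obtain ⟨r, hr⟩ := (h (ultPer (infPrefix w n) [α] α)).exists_isInfQuasiperiod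
    refine ⟨r, ⟨hr.1.1, ?_⟩, hr.1.2⟩
    rw [mapInf_ultPer_singleton hf _ _ _ α] at hr
    exact hr.infix_wpow_three_of_ultPer (hf α)
  have hfinite : candidates.Finite :=
    (wpow (f α) 3).sublists.finite_toSet.subset fun r hr => List.mem_sublists.2 hr.2.1.sublist
  obtain ⟨r, ⟨hr_ne, hr_infix, hr_len⟩, hr_cov⟩ :=
    hfinite.frequently_exists.1 (Filter.Frequently.of_forall (f := Filter.atTop) hy)
  have hy_agree : ∀ n, ∀ m < n, y n m = mapInf f w m := fun n m hm =>
    mapInf_congr f fun i hi => ultPer_infPrefix_of_lt w [α] α (by omega)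
  have hcov : InfCovers r (mapInf f w) := InfCovers.of_frequently hy_agree hr_cov
  have hqr : q.length ≤ r.length := hq_min r ⟨hr_ne, hcov⟩
  exact ⟨(hq_cov.prefix_of_length_le hcov hqr).isInfix.trans hr_infix, hqr.trans_lt hr_len⟩

end QPm
end

section
/- Let f be a non-erasing morphism such that for each letter a, f(a) is a nonempty power of a. Then for any word w (finite of length at least 2, or infinite), f(w) is quasiperiodic if and only if w is quasiperiodic. In particular, f is not weakly quasiperiodic on finite or infinite words. -/
/-!
Let `f a = a ^ K a`, so `f x` is `x` with its `p`-th letter repeated `K (x p)` times, in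
blocks. A quasiperiod of a word is a prefix of it. If `q` is a quasiperiod of `x`, then `f q`
is one of `f x`. Conversely let the prefix `q` of `f x` be a quasiperiod of `f x`. If `q` is a
power of a letter, so are `f x` and `x`. Otherwise `q` starts with a run `a ^ c` followed by
another letter; then `c` is a multiple of `K a`, and in any occurrence of `q` the first letter
change falls on a block boundary, so counting back `c / K a` blocks of `a` the occurrence
itself starts on a block boundary. From a block boundary on, the letters determine the blocks
one after another, so each occurrence of `q` sits on an occurrence of the shortest prefix of
`x` whose image contains `q`, and this prefix is a quasiperiod of `x`.
-/

namespace QPm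

variable {A : Type*}

/- `expand K g` is the infinite word obtained from `g` by repeating its `p`-th letter
`K (g p)` times; that block starts at position `blockStart K g p`, and position `i` lies in
block `blockOf K g i`. -/

def blockStart (K : A → ℕ) (g : ℕ → A) (p : ℕ) : ℕ := ∑ t ∈ Finset.range p, K (g t)

def blockOf (K : A → ℕ) (g : ℕ → A) (i : ℕ) : ℕ :=
  Nat.findGreatest (fun p => blockStart K g p ≤ i) i

def expand (K : A → ℕ) (g : ℕ → A) (i : ℕ) : A := g (blockOf K g i)

section Blocks

variable {K : A → ℕ} {g h : ℕ → A}

@[simp] lemma blockStart_zero : blockStart K g 0 = 0 := by simp [blockStart]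

lemma blockStart_succ (p : ℕ) : blockStart K g (p + 1) = blockStart K g p + K (g p) :=
  Finset.sum_range_succ _ _

lemma blockStart_const (a : A) (e : ℕ) : blockStart K (fun _ => a) e = e * K a := by
  simp [blockStart]

lemma blockStart_add_of_eq {j e : ℕ} (hgh : ∀ t < e, g (j + t) = h t) :
    blockStart K g (j + e) = blockStart K g j + blockStart K h e := by
  rw [blockStart, Finset.sum_range_add, blockStart, blockStart]
  congr 1
  exact Finset.sum_congr rfl fun t ht => by rw [hgh t (Finset.mem_range.1 ht)]

variable (hK : ∀ a, 0 < K a)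
include hK

lemma blockStart_strictMono : StrictMono (blockStart K g) :=
  strictMono_nat_of_lt_succ fun p => by rw [blockStart_succ]; have := hK (g p); omega

lemma le_blockStart (p : ℕ) : p ≤ blockStart K g p :=
  (blockStart_strictMono hK).le_apply

lemma blockStart_le_iff {p i : ℕ} : blockStart K g p ≤ i ↔ p ≤ blockOf K g i := by
  constructor
  · exact fun hp => Nat.le_findGreatest ((le_blockStart hK p).trans hp) hp
  · intro hp
    refine ((blockStart_strictMono hK).monotone hp).trans ?_
    exact Nat.findGreatest_spec (P := fun p => blockStart K g p ≤ i) (Nat.zero_le i) (by simp)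

lemma lt_blockStart_iff {q i : ℕ} : i < blockStart K g q ↔ blockOf K g i < q := by
  rw [← not_le, ← not_le, blockStart_le_iff hK]

lemma blockStart_blockOf_le (i : ℕ) : blockStart K g (blockOf K g i) ≤ i :=
  (blockStart_le_iff hK).2 le_rfl

lemma lt_blockStart_blockOf_succ (i : ℕ) : i < blockStart K g (blockOf K g i + 1) :=
  not_le.1 fun h => by simpa using (blockStart_le_iff hK).1 h

lemma blockOf_eq {p i : ℕ} (h₁ : blockStart K g p ≤ i) (h₂ : i < blockStart K g (p + 1)) :
    blockOf K g i = p :=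
  le_antisymm
    (Nat.lt_succ_iff.1 <| not_le.1 fun h => (h₂.trans_le ((blockStart_le_iff hK).2 h)).false)
    ((blockStart_le_iff hK).1 h₁)

lemma blockOf_blockStart (p : ℕ) : blockOf K g (blockStart K g p) = p :=
  blockOf_eq hK le_rfl ((blockStart_strictMono hK) (Nat.lt_succ_self p))

lemma expand_blockStart (p : ℕ) : expand K g (blockStart K g p) = g p := by
  rw [expand, blockOf_blockStart hK]

lemma expand_zero : expand K g 0 = g 0 := by
  simpa using expand_blockStart hK (g := g) 0

lemma blockStart_lt_iff {u n : ℕ} (hn : 0 < n) :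
    blockStart K g u < n ↔ u < blockOf K g (n - 1) + 1 := by
  rw [Nat.lt_succ_iff, ← blockStart_le_iff hK]
  omega

lemma expand_add {j e i : ℕ} (hgh : ∀ t < e, g (j + t) = h t) (hi : i < blockStart K h e) :
    expand K g (blockStart K g j + i) = expand K h i := by
  set p := blockOf K h i
  have hpe : p < e :=
    (blockStart_strictMono hK).lt_iff_lt.1 ((blockStart_blockOf_le hK i).trans_lt hi)
  have hp : blockStart K g (j + p) = blockStart K g j + blockStart K h p :=
    blockStart_add_of_eq fun t ht => hgh t (by omega)
  have hp₁ : blockStart K g (j + (p + 1)) = blockStart K g j + blockStart K h (p + 1) :=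
    blockStart_add_of_eq fun t ht => hgh t (by omega)
  have hblock : blockOf K g (blockStart K g j + i) = j + p := by
    have h₁ : blockStart K h p ≤ i := blockStart_blockOf_le hK i
    have h₂ : i < blockStart K h (p + 1) := lt_blockStart_blockOf_succ hK i
    rw [← add_assoc] at hp₁
    exact blockOf_eq hK (by omega) (by omega)
  rw [expand, expand, hblock, hgh p hpe]

end Blocks

section Synchronization

variable {K : A → ℕ} {g : ℕ → A} (hK : ∀ a, 0 < K a)
include hK

lemma blockStart_blockOf_of_ne {i : ℕ} (h : expand K g i ≠ expand K g (i + 1)) :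
    blockStart K g (blockOf K g (i + 1)) = i + 1 := by
  set p := blockOf K g (i + 1)
  have h₁ : blockStart K g p ≤ i + 1 := blockStart_blockOf_le hK _
  have h₂ : i + 1 < blockStart K g (p + 1) := lt_blockStart_blockOf_succ hK _
  by_contra hne
  exact h (by rw [expand, expand, blockOf_eq hK (by omega : blockStart K g p ≤ i) (by omega)])

lemma blockStart_sub_of_run {a : A} (e : ℕ) : ∀ r, e * K a ≤ blockStart K g r →
    (∀ i, blockStart K g r - e * K a ≤ i → i < blockStart K g r → expand K g i = a) →
    blockStart K g (r - e) = blockStart K g r - e * K a := by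
  induction e with
  | zero => simp
  | succ e ih =>
    intro r hr hrun
    rw [Nat.succ_mul] at hr hrun ⊢
    have ha := hK a
    obtain ⟨r, rfl⟩ : ∃ r', r = r' + 1 :=
      Nat.exists_eq_succ_of_ne_zero fun h => by rw [h, blockStart_zero] at hr; omega
    have hS := blockStart_succ (K := K) (g := g) r
    have := hK (g r)
    have hgr : g r = a := by
      have hlast := hrun (blockStart K g (r + 1) - 1) (by omega) (by omega)
      rwa [expand, blockOf_eq hK (p := r) (by omega) (by omega)] at hlast
    rw [hgr] at hS
    rw [show r + 1 - (e + 1) = r - e by omega,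
      ih r (by omega) fun i hi₁ hi₂ => hrun i (by omega) (by omega)]
    omega

lemma exists_blockStart_eq_of_prefix_occurrence {n j : ℕ}
    (hne : ∃ o < n, expand K g o ≠ expand K g 0)
    (hocc : ∀ o < n, expand K g (j + o) = expand K g o) :
    ∃ p, blockStart K g p = j := by
  classical
  set a := expand K g 0
  obtain ⟨hcn, hc⟩ := Nat.find_spec hne
  set c := Nat.find hne
  have hrun : ∀ o < c, expand K g o = a := fun o ho => by
    by_contra h
    exact Nat.find_min hne ho ⟨by omega, h⟩
  obtain ⟨c', hc'⟩ : ∃ c', c = c' + 1 :=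
    Nat.exists_eq_succ_of_ne_zero fun h => hc (by rw [h])
  have he : blockStart K g (blockOf K g c) = c := by
    rw [hc']
    refine blockStart_blockOf_of_ne hK ?_
    rw [← hc', hrun c' (by omega)]
    exact fun h => hc h.symm
  set e := blockOf K g c
  have hce : c = e * K a := by
    have hconst : ∀ t < e, g (0 + t) = a := fun t ht => by
      rw [zero_add, ← expand_blockStart hK (g := g)]
      exact hrun _ (he ▸ blockStart_strictMono hK ht)
    simpa [he, blockStart_const] using blockStart_add_of_eq (K := K) hconst
  have hr : blockStart K g (blockOf K g (j + c)) = j + c := by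
    rw [hc', ← add_assoc]
    refine blockStart_blockOf_of_ne hK ?_
    rw [add_assoc, ← hc', hocc c' (by omega), hocc c hcn, hrun c' (by omega)]
    exact fun h => hc h.symm
  refine ⟨blockOf K g (j + c) - e, ?_⟩
  rw [blockStart_sub_of_run hK (a := a) e _ (by omega) fun i hi₁ hi₂ => ?_, hr]
  · omega
  · rw [show i = j + (i - j) by omega, hocc _ (by omega)]
    exact hrun _ (by omega)

lemma apply_add_eq_of_prefix_occurrence {n j p : ℕ} (hp : blockStart K g p = j)
    (hocc : ∀ o < n, expand K g (j + o) = expand K g o) :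
    ∀ u, blockStart K g u < n → g (p + u) = g u := by
  intro u
  induction u using Nat.strong_induction_on with
  | _ u ih =>
    intro hu
    have hshift : blockStart K g (p + u) = j + blockStart K g u := hp ▸
      blockStart_add_of_eq fun t ht => ih t ht ((blockStart_strictMono hK ht).trans hu)
    rw [← expand_blockStart hK (g := g), hshift, hocc _ hu, expand_blockStart hK]

lemma exists_block_occurrence {n j : ℕ} (hne : ∃ o < n, expand K g o ≠ expand K g 0)
    (hocc : ∀ o < n, expand K g (j + o) = expand K g o) :
    ∃ p, blockStart K g p = j ∧ (∀ t < blockOf K g (n - 1) + 1, g (p + t) = g t) ∧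
      ∀ q, blockStart K g q < j + n ↔ q < p + (blockOf K g (n - 1) + 1) := by
  have hn : 0 < n := by obtain ⟨o, ho, -⟩ := hne; omega
  obtain ⟨p, hp⟩ := exists_blockStart_eq_of_prefix_occurrence hK hne hocc
  set L := blockOf K g (n - 1) + 1
  have hagree : ∀ t < L, g (p + t) = g t := fun t ht =>
    apply_add_eq_of_prefix_occurrence hK hp hocc t ((blockStart_lt_iff hK hn).2 ht)
  have hshift : ∀ u ≤ L, blockStart K g (p + u) = j + blockStart K g u := fun u hu =>
    hp ▸ blockStart_add_of_eq fun t ht => hagree t (by omega)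
  have hL₁ : blockStart K g (L - 1) < n := (blockStart_lt_iff hK hn).2 (by omega)
  have hL₂ : n ≤ blockStart K g L := by
    have : n - 1 < blockStart K g L := lt_blockStart_blockOf_succ hK _
    omega
  refine ⟨p, hp, hagree, fun q => ⟨fun hq => ?_, fun hq => ?_⟩⟩
  · by_contra hle
    have := (blockStart_strictMono hK (g := g)).monotone (not_lt.1 hle)
    have := hshift L le_rfl
    omega
  · have := (blockStart_strictMono hK (g := g)).monotone (show q ≤ p + (L - 1) by omega)
    have := hshift (L - 1) (by omega)
    omega

end Synchronization

def PrefixCovers (y : ℕ → A) (n m : ℕ) : Prop :=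
  ∀ i < m, ∃ j ≤ i, i < j + n ∧ j + n ≤ m ∧ ∀ o < n, y (j + o) = y o

def InfPrefixCovers (y : ℕ → A) (n : ℕ) : Prop :=
  ∀ i, ∃ j ≤ i, i < j + n ∧ ∀ o < n, y (j + o) = y o

section Covers

variable {y : ℕ → A} {n m : ℕ}

lemma PrefixCovers.eq_zero (h : PrefixCovers y n m) (hconst : ∀ o < n, y o = y 0) :
    ∀ i < m, y i = y 0 := fun i hi => by
  obtain ⟨j, hji, hij, -, hocc⟩ := h i hi
  calc y i = y (j + (i - j)) := by rw [Nat.add_sub_cancel' hji]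
    _ = y 0 := (hocc _ (by omega)).trans (hconst _ (by omega))

lemma InfPrefixCovers.eq_zero (h : InfPrefixCovers y n) (hconst : ∀ o < n, y o = y 0)
    (i : ℕ) : y i = y 0 := by
  obtain ⟨j, hji, hij, hocc⟩ := h i
  calc y i = y (j + (i - j)) := by rw [Nat.add_sub_cancel' hji]
    _ = y 0 := (hocc _ (by omega)).trans (hconst _ (by omega))

lemma prefixCovers_one (h : ∀ i < m, y i = y 0) : PrefixCovers y 1 m := fun i hi =>
  ⟨i, le_rfl, by omega, by omega, fun o ho => by rw [Nat.lt_one_iff.1 ho, add_zero, h i hi]⟩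

lemma infPrefixCovers_one (h : ∀ i, y i = y 0) : InfPrefixCovers y 1 := fun i =>
  ⟨i, le_rfl, by omega, fun o ho => by rw [Nat.lt_one_iff.1 ho, add_zero, h i]⟩

end Covers

section Expand

variable {K : A → ℕ} {g : ℕ → A} {n m : ℕ} (hK : ∀ a, 0 < K a)
include hK

lemma prefixCovers_expand (h : PrefixCovers g n m) :
    PrefixCovers (expand K g) (blockStart K g n) (blockStart K g m) := by
  intro i hi
  obtain ⟨j, hji, hij, hjm, hocc⟩ := h (blockOf K g i) ((lt_blockStart_iff hK).1 hi)
  have hend := blockStart_add_of_eq (K := K) hocc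
  exact ⟨blockStart K g j, (blockStart_le_iff hK).2 hji, hend ▸ (lt_blockStart_iff hK).2 hij,
    hend ▸ (blockStart_strictMono hK).monotone hjm, fun o ho => expand_add hK hocc ho⟩

lemma infPrefixCovers_expand (h : InfPrefixCovers g n) :
    InfPrefixCovers (expand K g) (blockStart K g n) := by
  intro i
  obtain ⟨j, hji, hij, hocc⟩ := h (blockOf K g i)
  have hend := blockStart_add_of_eq (K := K) hocc
  exact ⟨blockStart K g j, (blockStart_le_iff hK).2 hji, hend ▸ (lt_blockStart_iff hK).2 hij,
    fun o ho => expand_add hK hocc ho⟩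

lemma prefixCovers_of_prefixCovers_expand (hne : ∃ o < n, expand K g o ≠ expand K g 0)
    (h : PrefixCovers (expand K g) n (blockStart K g m)) :
    PrefixCovers g (blockOf K g (n - 1) + 1) m := by
  intro i hi
  obtain ⟨j, hji, hij, hjm, hocc⟩ := h (blockStart K g i) (blockStart_strictMono hK hi)
  obtain ⟨p, rfl, hagree, hwindow⟩ := exists_block_occurrence hK hne hocc
  refine ⟨p, (blockStart_strictMono hK).le_iff_le.1 hji, (hwindow i).1 hij, ?_, hagree⟩
  have hlast := (hwindow (p + blockOf K g (n - 1))).2 (by omega)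
  have := (blockStart_strictMono hK).lt_iff_lt.1 (hlast.trans_le hjm)
  omega

lemma infPrefixCovers_of_infPrefixCovers_expand (hne : ∃ o < n, expand K g o ≠ expand K g 0)
    (h : InfPrefixCovers (expand K g) n) :
    InfPrefixCovers g (blockOf K g (n - 1) + 1) := by
  intro i
  obtain ⟨j, hji, hij, hocc⟩ := h (blockStart K g i)
  obtain ⟨p, rfl, hagree, hwindow⟩ := exists_block_occurrence hK hne hocc
  exact ⟨p, (blockStart_strictMono hK).le_iff_le.1 hji, (hwindow i).1 hij, hagree⟩

lemma blockOf_lt_of_prefixCovers_expand (hne : ∃ o < n, expand K g o ≠ expand K g 0)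
    (hnm : n < blockStart K g m) (h : PrefixCovers (expand K g) n (blockStart K g m)) :
    blockOf K g (n - 1) + 1 < m := by
  obtain ⟨j, -, hj, hjm, hocc⟩ := h (blockStart K g m - 1) (by omega)
  obtain ⟨p, rfl, -, hwindow⟩ := exists_block_occurrence hK hne hocc
  have hp : p ≠ 0 := by rintro rfl; rw [blockStart_zero] at hj; omega
  have hlast := (hwindow (p + blockOf K g (n - 1))).2 (by omega)
  have := (blockStart_strictMono hK).lt_iff_lt.1 (hlast.trans_le hjm)
  omega

theorem exists_prefixCovers_expand_iff (hm : 2 ≤ m) :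
    (∃ n, 0 < n ∧ n < blockStart K g m ∧ PrefixCovers (expand K g) n (blockStart K g m)) ↔
      ∃ n, 0 < n ∧ n < m ∧ PrefixCovers g n m := by
  constructor
  · rintro ⟨n, hn, hnm, h⟩
    by_cases hne : ∃ o < n, expand K g o ≠ expand K g 0
    · exact ⟨_, Nat.succ_pos _, blockOf_lt_of_prefixCovers_expand hK hne hnm h,
        prefixCovers_of_prefixCovers_expand hK hne h⟩
    · push Not at hne
      refine ⟨1, one_pos, hm, prefixCovers_one fun p hp => ?_⟩
      rw [← expand_blockStart hK (g := g), ← expand_zero hK (g := g)]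
      exact h.eq_zero hne _ (blockStart_strictMono hK hp)
  · rintro ⟨n, hn, hnm, h⟩
    exact ⟨blockStart K g n, hn.trans_le (le_blockStart hK n), blockStart_strictMono hK hnm,
      prefixCovers_expand hK h⟩

theorem exists_infPrefixCovers_expand_iff :
    (∃ n, 0 < n ∧ InfPrefixCovers (expand K g) n) ↔ ∃ n, 0 < n ∧ InfPrefixCovers g n := by
  constructor
  · rintro ⟨n, hn, h⟩
    by_cases hne : ∃ o < n, expand K g o ≠ expand K g 0
    · exact ⟨_, Nat.succ_pos _, infPrefixCovers_of_infPrefixCovers_expand hK hne h⟩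
    · push Not at hne
      refine ⟨1, one_pos, infPrefixCovers_one fun p => ?_⟩
      rw [← expand_blockStart hK (g := g), ← expand_zero hK (g := g)]
      exact h.eq_zero hne _
  · rintro ⟨n, hn, h⟩
    exact ⟨blockStart K g n, hn.trans_le (le_blockStart hK n), infPrefixCovers_expand hK h⟩

end Expand

section Words

variable {w : List A} {y : ℕ → A}

lemma drop_take_eq_take_iff (hy : ∀ i (hi : i < w.length), y i = w[i]) {j n : ℕ}
    (hjn : j + n ≤ w.length) : (w.drop j).take n = w.take n ↔ ∀ o < n, y (j + o) = y o := by
  rw [List.ext_getElem_iff]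
  simp only [List.length_take, List.length_drop, List.getElem_take, List.getElem_drop]
  constructor
  · rintro ⟨-, h⟩ o ho
    rw [hy _ (by omega), hy _ (by omega)]
    exact h o (by omega) (by omega)
  · intro h
    refine ⟨by omega, fun o ho₁ ho₂ => ?_⟩
    rw [← hy _ (by omega), ← hy _ (by omega)]
    exact h o (by omega)

lemma quasiperiodic_iff_exists_prefixCovers (hy : ∀ i (hi : i < w.length), y i = w[i])
    (hw : w ≠ []) :
    Quasiperiodic w ↔ ∃ n, 0 < n ∧ n < w.length ∧ PrefixCovers y n w.length := by
  constructor
  · rintro ⟨q, hq, hwq, hcov⟩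
    obtain ⟨j, hj, -, hqw, hprefix⟩ := hcov 0 (List.length_pos_iff.2 hw)
    obtain rfl : j = 0 := by omega
    rw [List.drop_zero] at hprefix
    rw [zero_add] at hqw
    refine ⟨q.length, List.length_pos_iff.2 hq, lt_of_le_of_ne hqw fun h => hwq ?_, ?_⟩
    · rw [← hprefix, h, List.take_length]
    · intro i hi
      obtain ⟨j, hji, hij, hjq, hocc⟩ := hcov i hi
      exact ⟨j, hji, hij, hjq, (drop_take_eq_take_iff hy hjq).1 (hocc.trans hprefix.symm)⟩
  · rintro ⟨n, hn, hnw, h⟩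
    have hlen : (w.take n).length = n := by simp; omega
    refine ⟨w.take n, fun h' => by simp [h'] at hlen; omega,
      fun h' => by rw [← h'] at hlen; omega, fun i hi => ?_⟩
    obtain ⟨j, hji, hij, hjn, hocc⟩ := h i hi
    rw [hlen]
    exact ⟨j, hji, hij, hjn, (drop_take_eq_take_iff hy hjn).2 hocc⟩

lemma infQuasiperiodic_iff_exists_infPrefixCovers (x : ℕ → A) :
    InfQuasiperiodic x ↔ ∃ n, 0 < n ∧ InfPrefixCovers x n := by
  constructor
  · rintro ⟨q, hq, hcov⟩
    obtain ⟨j, hj, -, hprefix⟩ := hcov 0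
    obtain rfl : j = 0 := by omega
    refine ⟨q.length, List.length_pos_iff.2 hq, fun i => ?_⟩
    obtain ⟨j, hji, hij, hocc⟩ := hcov i
    exact ⟨j, hji, hij, fun o ho => by rw [hocc o ho, ← hprefix o ho, zero_add]⟩
  · rintro ⟨n, hn, h⟩
    refine ⟨List.ofFn fun t : Fin n => x t, by simp; omega, fun i => ?_⟩
    obtain ⟨j, hji, hij, hocc⟩ := h i
    exact ⟨j, hji, by simpa using hij, fun o ho => by simpa using hocc o (by simpa using ho)⟩

end Words

def powMorphism (K : A → ℕ) (a : A) : List A := List.replicate (K a) a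

section PowMorphism

variable {K : A → ℕ}

lemma applyF_powMorphism_cons (a : A) (w : List A) :
    applyF (powMorphism K) (a :: w) = List.replicate (K a) a ++ applyF (powMorphism K) w := by
  simp [applyF, powMorphism]

lemma length_applyF_powMorphism {w : List A} {g : ℕ → A}
    (hg : ∀ t (ht : t < w.length), g t = w[t]) :
    (applyF (powMorphism K) w).length = blockStart K g w.length := by
  induction w generalizing g with
  | nil => simp [applyF]
  | cons a w ih =>
    have htail := ih (g := fun t => g (1 + t)) fun t ht => by
      simpa [add_comm] using hg (1 + t) (by simp; omega)
    rw [applyF_powMorphism_cons, List.length_append, List.length_replicate, htail,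
      List.length_cons, Nat.add_comm w.length 1,
      blockStart_add_of_eq (h := fun t => g (1 + t)) fun t _ => rfl]
    simp [blockStart, hg 0 (by simp)]

variable (hK : ∀ a, 0 < K a)
include hK

lemma getElem_applyF_powMorphism {w : List A} {g : ℕ → A}
    (hg : ∀ t (ht : t < w.length), g t = w[t]) {i : ℕ}
    (hi : i < (applyF (powMorphism K) w).length) :
    (applyF (powMorphism K) w)[i] = expand K g i := by
  induction w generalizing g i with
  | nil => simp [applyF] at hi
  | cons a w ih =>
    have hg₀ : g 0 = a := hg 0 (by simp)
    have hS₁ : blockStart K g 1 = K a := by simp [blockStart, hg₀]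
    simp only [applyF_powMorphism_cons, List.getElem_append, List.length_replicate,
      List.getElem_replicate]
    split_ifs with hia
    · rw [expand, blockOf_eq hK (p := 0) (by simp) (by simpa [hS₁] using hia), hg₀]
    · have htail : ∀ t (ht : t < w.length), g (1 + t) = w[t] := fun t ht => by
        simpa [add_comm] using hg (1 + t) (by simp; omega)
      have hlen := length_applyF_powMorphism (K := K) htail
      rw [applyF_powMorphism_cons, List.length_append, List.length_replicate] at hi
      rw [ih htail, ← expand_add hK (e := w.length) (fun t _ => rfl) (by omega), hS₁,
        Nat.add_sub_cancel' (by omega)]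

lemma mapInf_powMorphism (x : ℕ → A) : mapInf (powMorphism K) x = expand K x := by
  funext n
  have hx : ∀ t (ht : t < (List.ofFn fun i : Fin (n + 1) => x i).length),
      x t = (List.ofFn fun i : Fin (n + 1) => x i)[t] := fun t ht => (List.getElem_ofFn ht).symm
  have hn : n < (applyF (powMorphism K) (List.ofFn fun i : Fin (n + 1) => x i)).length := by
    rw [length_applyF_powMorphism hx, List.length_ofFn]
    exact Nat.lt_of_lt_of_le (Nat.lt_succ_self n) (le_blockStart hK _)
  rw [mapInf, List.getD_eq_getElem _ _ hn, getElem_applyF_powMorphism hK hx]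

theorem quasiperiodic_applyF_powMorphism_iff {w : List A} (hw : 2 ≤ w.length) :
    Quasiperiodic (applyF (powMorphism K) w) ↔ Quasiperiodic w := by
  set g : ℕ → A := fun t => w.getD t (w[0]'(by omega))
  have hg : ∀ t (ht : t < w.length), g t = w[t] := fun t ht => List.getD_eq_getElem _ _ ht
  have hlen := length_applyF_powMorphism (K := K) hg
  have hw₀ : w ≠ [] := List.ne_nil_of_length_pos (by omega)
  have himage : applyF (powMorphism K) w ≠ [] :=
    List.ne_nil_of_length_pos (by rw [hlen]; exact (le_blockStart hK _).trans_lt' (by omega))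
  rw [quasiperiodic_iff_exists_prefixCovers
      (fun i hi => (getElem_applyF_powMorphism hK hg hi).symm) himage,
    quasiperiodic_iff_exists_prefixCovers hg hw₀, hlen]
  exact exists_prefixCovers_expand_iff hK hw

theorem infQuasiperiodic_mapInf_powMorphism_iff (x : ℕ → A) :
    InfQuasiperiodic (mapInf (powMorphism K) x) ↔ InfQuasiperiodic x := by
  rw [mapInf_powMorphism hK, infQuasiperiodic_iff_exists_infPrefixCovers,
    infQuasiperiodic_iff_exists_infPrefixCovers]
  exact exists_infPrefixCovers_expand_iff hK

end PowMorphism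

theorem stmt16 {A : Type*} (f : A → List A)
    (hf : ∀ a : A, ∃ k : ℕ, 1 ≤ k ∧ f a = List.replicate k a) :
    (∀ w : List A, 2 ≤ w.length → (Quasiperiodic (applyF f w) ↔ Quasiperiodic w)) ∧
    (∀ x : ℕ → A, InfQuasiperiodic (mapInf f x) ↔ InfQuasiperiodic x) ∧
    ¬ (∃ w : List A, 2 ≤ w.length ∧ ¬ Quasiperiodic w ∧ Quasiperiodic (applyF f w)) ∧
    ¬ WeaklyQPInf f := by
  choose K hK hfK using hf
  obtain rfl : f = powMorphism K := funext hfK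
  have hfin := fun (w : List A) (hw : 2 ≤ w.length) => quasiperiodic_applyF_powMorphism_iff hK hw
  have hinf := infQuasiperiodic_mapInf_powMorphism_iff hK
  refine ⟨hfin, hinf, ?_, ?_⟩
  · rintro ⟨w, hw, hnot, himage⟩
    exact hnot ((hfin w hw).1 himage)
  · rintro ⟨x, hnot, himage⟩
    exact hnot ((hinf x).1 himage)

end QPm
end
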